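/- arXiv:1803.01757 — 3 statements merged into one kernel-verified Lean document; each statement's English description precedes it below -/
import Mathlib

section
/- Set c₁ := 2ω̄³ωρ + 20ρω̄ and c₂ := 3 + (1/2)ω̄⁴ω² + (1/2)ωω̄². Then for all x ∈ B_{2ρ}(x₀) and z ∈ B_{6ρ}(x₀) there holds Φ^δ(z − ω G_ω^δ(z)) ≤ Φ^δ(x) + ⟨G_ω^δ(z), z − x⟩ − (ω/2)‖G_ω^δ(z)‖² + c₁δ + c₂δ². -/
open Metric Filter
open scoped RealInnerProductSpace Topology

lemma line_hasDerivAt'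
    {X Y : Type*} [NormedAddCommGroup X] [InnerProductSpace ℝ X] [CompleteSpace X]
    [NormedAddCommGroup Y] [InnerProductSpace ℝ Y] [CompleteSpace Y]
    (F : X → Y) (F' : X → X →L[ℝ] Y) (y : Y) (a b : X) (t : ℝ)
    (hd : HasFDerivAt F (F' (a + t • b)) (a + t • b)) :
    HasDerivAt (fun s : ℝ => (1 / 2) * ‖F (a + s • b) - y‖ ^ 2)
      ⟪(ContinuousLinearMap.adjoint (F' (a + t • b))) (F (a + t • b) - y), b⟫ t := by
  have hγ : HasDerivAt (fun s : ℝ => a + s • b) b t := by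
    simpa using ((hasDerivAt_id t).smul_const b).const_add a
  have h1 : HasDerivAt (fun s : ℝ => F (a + s • b) - y) (F' (a + t • b) b) t :=
    (hd.comp_hasDerivAt t hγ).sub_const y
  have h2 := (h1.inner ℝ h1).const_mul (1 / 2 : ℝ)
  have hfun : (fun s : ℝ => (1 / 2) * ‖F (a + s • b) - y‖ ^ 2)
      = fun s : ℝ => (1 / 2) * ⟪F (a + s • b) - y, F (a + s • b) - y⟫ := by
    funext s; rw [real_inner_self_eq_norm_sq]
  rw [hfun]
  have hval : ⟪(ContinuousLinearMap.adjoint (F' (a + t • b))) (F (a + t • b) - y), b⟫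
      = (1 / 2) * (⟪F (a + t • b) - y, F' (a + t • b) b⟫ + ⟪F' (a + t • b) b, F (a + t • b) - y⟫) := by
    rw [ContinuousLinearMap.adjoint_inner_left, real_inner_comm (F' (a + t • b) b)]
    ring
  rw [hval]
  exact h2


set_option maxHeartbeats 2000000 in
/-- With `c₁ := 2ω̄³ωρ + 20ρω̄` and `c₂ := 3 + ω̄⁴ω²/2 + ωω̄²/2`, for all
`x ∈ B_{2ρ}(x₀)` and `z ∈ B_{6ρ}(x₀)` there holds
`Φ^δ(z − ω G_ω^δ(z)) ≤ Φ^δ(x) + ⟨G_ω^δ(z), z − x⟩ − (ω/2)‖G_ω^δ(z)‖² + c₁δ + c₂δ²`. -/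
theorem nesterov_descent_noisy
    {X Y : Type*} [NormedAddCommGroup X] [InnerProductSpace ℝ X] [CompleteSpace X]
    [NormedAddCommGroup Y] [InnerProductSpace ℝ Y] [CompleteSpace Y]
    (x₀ : X) (ρ : ℝ) (hρ : 0 < ρ)
    (F : X → Y) (F' : X → X →L[ℝ] Y)
    (hF : ∀ u ∈ closedBall x₀ (6 * ρ), HasFDerivAt F (F' u) u)
    (ωb : ℝ) (hωb : ∀ u ∈ closedBall x₀ (6 * ρ), ‖F' u‖ ≤ ωb)
    (y : Y) (xstar : X) (hxstar : xstar ∈ closedBall x₀ ρ) (hFxstar : F xstar = y)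
    (δ : ℝ) (yδ : Y) (hδ : ‖y - yδ‖ ≤ δ)
    -- the residual functionals and the gradient of the noisy one
    (Φδ Φ0 : X → ℝ)
    (hΦδ : ∀ u, Φδ u = (1 / 2) * ‖F u - yδ‖ ^ 2)
    (hΦ0 : ∀ u, Φ0 u = (1 / 2) * ‖F u - y‖ ^ 2)
    (gradΦδ : X → X)
    (hgradδ : ∀ u, gradΦδ u = (ContinuousLinearMap.adjoint (F' u)) (F u - yδ))
    -- convexity and Lipschitz continuity of the exact gradient on `B_{6ρ}(x₀)`
    (hconv : ConvexOn ℝ (closedBall x₀ (6 * ρ)) Φ0)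
    (L : ℝ) (hL : 0 < L)
    (hLip : ∀ u ∈ closedBall x₀ (6 * ρ), ∀ v ∈ closedBall x₀ (6 * ρ),
      ‖(ContinuousLinearMap.adjoint (F' u)) (F u - y) -
        (ContinuousLinearMap.adjoint (F' v)) (F v - y)‖ ≤ L * ‖u - v‖)
    (ω : ℝ) (hω : 0 < ω) (hωL : ω < 1 / L)
    -- `P` is the metric projection onto the closed ball `B_{2ρ}(x₀)`
    (P : X → X)
    (hP_mem : ∀ u, P u ∈ closedBall x₀ (2 * ρ))
    (hP_proj : ∀ u, ∀ v ∈ closedBall x₀ (2 * ρ), ‖u - P u‖ ≤ ‖u - v‖)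
    -- the gradient mapping `G_ω^δ`
    (Gδ : X → X)
    (hGδ : ∀ u, Gδ u = ω⁻¹ • (u - P (u - ω • gradΦδ u)))
    -- the constants
    (c₁ c₂ : ℝ)
    (hc₁ : c₁ = 2 * ωb ^ 3 * ω * ρ + 20 * ρ * ωb)
    (hc₂ : c₂ = 3 + (1 / 2) * ωb ^ 4 * ω ^ 2 + (1 / 2) * ω * ωb ^ 2) :
    ∀ x ∈ closedBall x₀ (2 * ρ), ∀ z ∈ closedBall x₀ (6 * ρ),
      Φδ (z - ω • Gδ z) ≤ Φδ x + ⟪Gδ z, z - x⟫ - (ω / 2) * ‖Gδ z‖ ^ 2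
        + c₁ * δ + c₂ * δ ^ 2 := by
  intro x hx z hz
  set g0 : X → X := fun u => (ContinuousLinearMap.adjoint (F' u)) (F u - y) with hg0
  have h26 : closedBall x₀ (2 * ρ) ⊆ closedBall x₀ (6 * ρ) :=
    closedBall_subset_closedBall (by linarith)
  have hx6 : x ∈ closedBall x₀ (6 * ρ) := h26 hx
  have hxstar6 : xstar ∈ closedBall x₀ (6 * ρ) :=
    closedBall_subset_closedBall (by linarith) hxstar
  have hx₀6 : x₀ ∈ closedBall x₀ (6 * ρ) := mem_closedBall_self (by linarith)
  have hωb0 : (0 : ℝ) ≤ ωb := le_trans (norm_nonneg _) (hωb x₀ hx₀6)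
  have hδ0 : (0 : ℝ) ≤ δ := le_trans (norm_nonneg _) hδ
  set uu := z - ω • gradΦδ z with huu
  set zp := P uu with hzp
  have hzp2 : zp ∈ closedBall x₀ (2 * ρ) := hP_mem uu
  have hzp6 : zp ∈ closedBall x₀ (6 * ρ) := h26 hzp2
  -- z - ω • Gδ z = zp
  have hωG : ω • Gδ z = z - zp := by
    rw [hGδ z, smul_smul, mul_inv_cancel₀ hω.ne', one_smul, ← huu, ← hzp]
  have hz_sub : z - ω • Gδ z = zp := by rw [hωG]; abel
  clear_value uu zp
  -- line derivative of Φ0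
  have hline : ∀ a b : X, ∀ t : ℝ, a + t • b ∈ closedBall x₀ (6 * ρ) →
      HasDerivAt (fun s : ℝ => Φ0 (a + s • b)) ⟪g0 (a + t • b), b⟫ t := by
    intro a b t hmem
    have := line_hasDerivAt' F F' y a b t (hF _ hmem)
    simpa only [hΦ0, hg0] using this
  -- convexity support inequality
  have hsupp : ⟪g0 z, x - z⟫ ≤ Φ0 x - Φ0 z := by
    set b := x - z with hb
    have hd0 : HasDerivAt (fun s : ℝ => Φ0 (z + s • b)) ⟪g0 z, b⟫ 0 := by
      have := hline z b 0 (by simpa using hz)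
      simpa using this
    have ht1 : Tendsto (slope (fun s : ℝ => Φ0 (z + s • b)) 0) (𝓝[>] 0) (𝓝 ⟪g0 z, b⟫) :=
      (hasDerivAt_iff_tendsto_slope.mp hd0).mono_left
        (nhdsWithin_mono 0 (fun u hu => Set.mem_compl_singleton_iff.mpr (ne_of_gt hu)))
    have hev : ∀ᶠ t in 𝓝[>] (0 : ℝ), slope (fun s : ℝ => Φ0 (z + s • b)) 0 t ≤ Φ0 x - Φ0 z := by
      filter_upwards [Ioc_mem_nhdsGT one_pos] with t ht
      have hpt : (1 - t) • z + t • x = z + t • b := by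
        rw [hb, smul_sub, sub_smul, one_smul]; abel
      have hcv := hconv.2 hz hx6 (by linarith [ht.2] : (0:ℝ) ≤ 1 - t) ht.1.le (by ring)
      rw [hpt] at hcv
      rw [smul_eq_mul, smul_eq_mul] at hcv
      have hslope : slope (fun s : ℝ => Φ0 (z + s • b)) 0 t
          = (Φ0 (z + t • b) - Φ0 (z + (0:ℝ) • b)) / t := by
        simp [slope_def_field]
      rw [hslope, div_le_iff₀ ht.1]
      have h0 : z + (0:ℝ) • b = z := by simp
      rw [h0]
      nlinarith [hcv]
    exact le_of_tendsto ht1 hev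
  -- descent lemma
  have hdescent : Φ0 zp ≤ Φ0 z + ⟪g0 z, zp - z⟫ + (L / 2) * ‖zp - z‖ ^ 2 := by
    set b := zp - z with hb
    have hmemt : ∀ t ∈ Set.Icc (0:ℝ) 1, z + t • b ∈ closedBall x₀ (6 * ρ) := by
      intro t ht
      have hpt : (1 - t) • z + t • zp = z + t • b := by
        rw [hb, smul_sub, sub_smul, one_smul]; abel
      have := (convex_closedBall x₀ (6 * ρ)) hz hzp6 (by linarith [ht.2] : (0:ℝ) ≤ 1 - t)
        ht.1 (by ring)
      rwa [hpt] at this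
    set ψ : ℝ → ℝ := fun t => Φ0 (z + t • b) - t * ⟪g0 z, b⟫ - (L / 2) * t ^ 2 * ‖b‖ ^ 2
      with hψ
    have hψd : ∀ t ∈ Set.Icc (0:ℝ) 1, HasDerivAt ψ
        (⟪g0 (z + t • b), b⟫ - ⟪g0 z, b⟫ - (L / 2) * ((2:ℕ) * t ^ 1) * ‖b‖ ^ 2) t := by
      intro t ht
      exact ((hline z b t (hmemt t ht)).sub (hasDerivAt_mul_const ⟪g0 z, b⟫)).sub
        (((hasDerivAt_pow 2 t).const_mul (L / 2)).mul_const (‖b‖ ^ 2))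
    have hanti : AntitoneOn ψ (Set.Icc 0 1) := by
      apply antitoneOn_of_deriv_nonpos (convex_Icc 0 1)
      · intro t ht; exact (hψd t ht).continuousAt.continuousWithinAt
      · intro t ht
        exact ((hψd t (interior_subset ht)).differentiableAt).differentiableWithinAt
      · intro t ht
        rw [interior_Icc] at ht
        have ht' : t ∈ Set.Icc (0:ℝ) 1 := Set.mem_Icc.mpr ⟨ht.1.le, ht.2.le⟩
        rw [(hψd t ht').deriv]
        have h1 : ⟪g0 (z + t • b), b⟫ - ⟪g0 z, b⟫ = ⟪g0 (z + t • b) - g0 z, b⟫ :=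
          (inner_sub_left _ _ _).symm
        have h2 : ⟪g0 (z + t • b) - g0 z, b⟫ ≤ ‖g0 (z + t • b) - g0 z‖ * ‖b‖ :=
          real_inner_le_norm _ _
        have h3 : ‖g0 (z + t • b) - g0 z‖ ≤ L * ‖(z + t • b) - z‖ :=
          hLip _ (hmemt t ht') _ hz
        have h4 : ‖(z + t • b) - z‖ = t * ‖b‖ := by
          have : (z + t • b) - z = t • b := by abel
          rw [this, norm_smul, Real.norm_eq_abs, abs_of_nonneg ht'.1]
        rw [h4] at h3
        have h5 : ‖g0 (z + t • b) - g0 z‖ * ‖b‖ ≤ (L * (t * ‖b‖)) * ‖b‖ :=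
          mul_le_mul_of_nonneg_right h3 (norm_nonneg _)
        rw [h1]
        have : ((2:ℕ):ℝ) = 2 := by norm_num
        rw [this]
        nlinarith [h2, h5]
    have h10 := hanti (Set.mem_Icc.mpr ⟨le_refl 0, zero_le_one⟩)
      (Set.mem_Icc.mpr ⟨zero_le_one, le_refl 1⟩) zero_le_one
    have hψ0 : ψ 0 = Φ0 z := by simp [hψ]
    have hψ1 : ψ 1 = Φ0 zp - ⟪g0 z, b⟫ - (L / 2) * ‖b‖ ^ 2 := by
      have h1b : z + (1:ℝ) • b = zp := by rw [hb, one_smul]; abel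
      rw [hψ]
      simp only [one_pow, mul_one, one_mul]
      rw [h1b]
    rw [hψ0, hψ1] at h10
    linarith [h10]
  -- projection variational inequality
  haveI : Nonempty ↥(closedBall x₀ (2 * ρ)) := ⟨⟨zp, hzp2⟩⟩
  have hiInf : ‖uu - zp‖ = ⨅ w : closedBall x₀ (2 * ρ), ‖uu - w‖ := by
    refine le_antisymm (le_ciInf fun w => by rw [hzp]; exact hP_proj uu w w.2) ?_
    exact ciInf_le ⟨0, by rintro r ⟨w, rfl⟩; exact norm_nonneg _⟩
      (⟨zp, hzp2⟩ : closedBall x₀ (2 * ρ))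
  have hVI : ⟪uu - zp, x - zp⟫ ≤ 0 :=
    (norm_eq_iInf_iff_real_inner_le_zero (convex_closedBall _ _) hzp2).mp hiInf x hx
  have huuzp : uu - zp = ω • (Gδ z - gradΦδ z) := by
    rw [smul_sub, hωG, huu]; abel
  have hVI2 : ⟪Gδ z - gradΦδ z, x - zp⟫ ≤ 0 := by
    rw [huuzp, real_inner_smul_left] at hVI
    nlinarith [hVI]
  have i4 : ⟪gradΦδ z, zp - x⟫ ≤ ⟪Gδ z, zp - x⟫ := by
    have hneg : x - zp = -(zp - x) := by abel
    rw [hneg, inner_neg_right, inner_sub_left] at hVI2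
    linarith [hVI2]
  -- error bound
  have s4 : ‖gradΦδ z - g0 z‖ ≤ ωb * δ := by
    have heq : gradΦδ z - g0 z = (ContinuousLinearMap.adjoint (F' z)) (y - yδ) := by
      rw [hgradδ, hg0, ← map_sub]
      congr 1; abel
    rw [heq]
    calc ‖(ContinuousLinearMap.adjoint (F' z)) (y - yδ)‖
        ≤ ‖ContinuousLinearMap.adjoint (F' z)‖ * ‖y - yδ‖ :=
          ContinuousLinearMap.le_opNorm _ _
      _ ≤ ωb * δ := by
          have : ‖ContinuousLinearMap.adjoint (F' z)‖ = ‖F' z‖ :=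
            ContinuousLinearMap.adjoint.norm_map (F' z)
          rw [this]
          exact mul_le_mul (hωb z hz) hδ (norm_nonneg _) hωb0
  -- distance bounds
  have s6 : ‖zp - x‖ ≤ 4 * ρ := by
    have h1 := mem_closedBall.mp hzp2
    have h2 := mem_closedBall.mp hx
    have := dist_triangle zp x₀ x
    rw [dist_eq_norm] at this h1
    rw [dist_comm, dist_eq_norm] at h2
    calc ‖zp - x‖ ≤ ‖zp - x₀‖ + ‖x₀ - x‖ := by
          have h := norm_sub_le_norm_sub_add_norm_sub zp x₀ x
          exact h
      _ ≤ 4 * ρ := by linarith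
  have hMVT : ∀ u ∈ closedBall x₀ (6 * ρ), ‖F u - y‖ ≤ ωb * ‖u - xstar‖ := by
    intro u hu
    rw [← hFxstar]
    exact (convex_closedBall x₀ (6 * ρ)).norm_image_sub_le_of_norm_hasFDerivWithin_le
      (fun v hv => (hF v hv).hasFDerivWithinAt) hωb hxstar6 hu
  have hd3 : ∀ u ∈ closedBall x₀ (2 * ρ), ‖u - xstar‖ ≤ 3 * ρ := by
    intro u hu
    have h1 := mem_closedBall.mp hu
    have h2 := mem_closedBall.mp hxstar
    rw [dist_eq_norm] at h1 h2
    calc ‖u - xstar‖ ≤ ‖u - x₀‖ + ‖x₀ - xstar‖ := norm_sub_le_norm_sub_add_norm_sub u x₀ xstar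
      _ ≤ 3 * ρ := by
          have : ‖x₀ - xstar‖ = ‖xstar - x₀‖ := norm_sub_rev _ _
          linarith [this ▸ h2]
  have s7 : ‖F zp - y‖ ≤ ωb * (3 * ρ) :=
    le_trans (hMVT zp hzp6) (mul_le_mul_of_nonneg_left (hd3 zp hzp2) hωb0)
  have s8 : ‖F x - y‖ ≤ ωb * (3 * ρ) :=
    le_trans (hMVT x hx6) (mul_le_mul_of_nonneg_left (hd3 x hx) hωb0)
  -- Φδ vs Φ0 comparisons
  have s9 : Φδ zp ≤ Φ0 zp + ‖F zp - y‖ * δ + (1 / 2) * δ ^ 2 := by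
    have hn : ‖F zp - yδ‖ ≤ ‖F zp - y‖ + δ := by
      calc ‖F zp - yδ‖ = ‖(F zp - y) + (y - yδ)‖ := by rw [sub_add_sub_cancel]
        _ ≤ ‖F zp - y‖ + ‖y - yδ‖ := norm_add_le _ _
        _ ≤ ‖F zp - y‖ + δ := by linarith
    rw [hΦδ, hΦ0]
    nlinarith [norm_nonneg (F zp - yδ), norm_nonneg (F zp - y), hn]
  have s10 : Φ0 x ≤ Φδ x + ‖F x - y‖ * δ + (3 / 2) * δ ^ 2 := by
    have hn : ‖F x - y‖ ≤ ‖F x - yδ‖ + δ := by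
      calc ‖F x - y‖ = ‖(F x - yδ) + (yδ - y)‖ := by rw [sub_add_sub_cancel]
        _ ≤ ‖F x - yδ‖ + ‖yδ - y‖ := norm_add_le _ _
        _ ≤ ‖F x - yδ‖ + δ := by
          have h := norm_sub_rev yδ y
          linarith
    have hn2 : ‖F x - yδ‖ ≤ ‖F x - y‖ + δ := by
      calc ‖F x - yδ‖ = ‖(F x - y) + (y - yδ)‖ := by rw [sub_add_sub_cancel]
        _ ≤ ‖F x - y‖ + ‖y - yδ‖ := norm_add_le _ _
        _ ≤ ‖F x - y‖ + δ := by linarith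
    have ha : ‖F x - y‖ * ‖F x - y‖ ≤ (‖F x - yδ‖ + δ) * (‖F x - yδ‖ + δ) :=
      mul_self_le_mul_self (norm_nonneg _) hn
    have hb2 : ‖F x - yδ‖ * δ ≤ (‖F x - y‖ + δ) * δ := mul_le_mul_of_nonneg_right hn2 hδ0
    rw [hΦδ, hΦ0]
    nlinarith [ha, hb2]
  -- inner product identities
  have i1 : ⟪g0 z, zp - z⟫ - ⟪g0 z, x - z⟫ = ⟪g0 z, zp - x⟫ := by
    rw [← inner_sub_right]
    congr 1; abel
  have i2 : ⟪g0 z, zp - x⟫ = ⟪gradΦδ z, zp - x⟫ - ⟪gradΦδ z - g0 z, zp - x⟫ := by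
    rw [← inner_sub_left]
    congr 1; abel
  have i3 : -(ωb * δ * (4 * ρ)) ≤ ⟪gradΦδ z - g0 z, zp - x⟫ := by
    have habs := abs_real_inner_le_norm (gradΦδ z - g0 z) (zp - x)
    have hb : ‖gradΦδ z - g0 z‖ * ‖zp - x‖ ≤ (ωb * δ) * (4 * ρ) :=
      mul_le_mul s4 s6 (norm_nonneg _) (mul_nonneg hωb0 hδ0)
    have := neg_abs_le ⟪gradΦδ z - g0 z, zp - x⟫
    linarith
  have i5 : ⟪Gδ z, zp - x⟫ = ⟪Gδ z, z - x⟫ - ω * ‖Gδ z‖ ^ 2 := by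
    have hrw : zp - x = (z - x) - ω • Gδ z := by rw [hωG]; abel
    rw [hrw, inner_sub_right, real_inner_smul_right, real_inner_self_eq_norm_sq]
  -- step size bound
  have hLω : L * ω ≤ 1 := by
    have := (lt_div_iff₀ hL).mp hωL
    linarith
  have s5 : ‖zp - z‖ ^ 2 = ω ^ 2 * ‖Gδ z‖ ^ 2 := by
    have : zp - z = -(ω • Gδ z) := by rw [hωG]; abel
    rw [this, norm_neg, norm_smul, Real.norm_eq_abs, abs_of_pos hω, mul_pow]
  have hquad : (L / 2) * ‖zp - z‖ ^ 2 ≤ (ω / 2) * ‖Gδ z‖ ^ 2 := by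
    rw [s5]
    nlinarith [sq_nonneg ‖Gδ z‖, hω.le, hL.le, mul_nonneg (mul_nonneg hω.le hω.le) (sq_nonneg ‖Gδ z‖)]
  -- assemble
  rw [hz_sub]
  have key : Φ0 zp ≤ Φ0 x + ⟪Gδ z, z - x⟫ - (ω / 2) * ‖Gδ z‖ ^ 2 + ωb * δ * (4 * ρ) := by
    have hGnn : 0 ≤ ‖Gδ z‖ ^ 2 := sq_nonneg _
    linarith only [hdescent, hsupp, i1, i2, i3, i4, i5, hquad]
  have hfin1 : ωb * (3 * ρ) * δ ≤ ωb * (3 * ρ) * δ := le_refl _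
  have hδρωb : 0 ≤ ρ * ωb * δ := by positivity
  have hc1x : 10 * ρ * ωb * δ ≤ c₁ * δ := by
    have h1 : 10 * ρ * ωb ≤ c₁ := by
      rw [hc₁]
      have h2 : 0 ≤ ωb ^ 3 * ω * ρ := by positivity
      have h3 : 0 ≤ ρ * ωb := mul_nonneg hρ.le hωb0
      linarith only [h2, h3]
    exact mul_le_mul_of_nonneg_right h1 hδ0
  have hc2x : 2 * δ ^ 2 ≤ c₂ * δ ^ 2 := by
    have h1 : (2:ℝ) ≤ c₂ := by
      rw [hc₂]
      have h2 : 0 ≤ ωb ^ 4 * ω ^ 2 := by positivity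
      have h3 : 0 ≤ ω * ωb ^ 2 := by positivity
      linarith only [h2, h3]
    exact mul_le_mul_of_nonneg_right h1 (sq_nonneg δ)
  have hs7δ : ‖F zp - y‖ * δ ≤ ωb * (3 * ρ) * δ := mul_le_mul_of_nonneg_right s7 hδ0
  have hs8δ : ‖F x - y‖ * δ ≤ ωb * (3 * ρ) * δ := mul_le_mul_of_nonneg_right s8 hδ0
  linarith only [s9, s10, key, hs7δ, hs8δ, hc1x, hc2x]
end

section
/- For every k ≥ 0 there holds E^δ(k+1) + (2ω/(α−1))·( k(α−3)(Φ^δ(x_k^δ) − Φ^δ(x_*)) − (k+α−1)²Δ(δ) ) ≤ E^δ(k), where Δ(δ) := c₁δ + c₂δ² with c₁ := 2ω̄³ωρ + 20ρω̄ and c₂ := 3 + (1/2)ω̄⁴ω² + (1/2)ωω̄². -/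
/-!
With `θ = (α - 1) / (k + α - 1)` and `v = (1 - θ) x_k + θ x_*` one has
`(α - 1)(w_k - x_*) = (k + α - 1)(z_k - v)` and `(α - 1)(w_{k+1} - x_*) = (k + α - 1)(x_{k+1} - v)`.
For exact data, the descent lemma, the gradient inequality of the convex `Φ⁰` and the variational
inequality of the projection give `2ω(Φ⁰(x_{k+1}) - Φ⁰(v)) ≤ ‖z_k - v‖² - ‖x_{k+1} - v‖²`, and
convexity gives `Φ⁰(v) ≤ (1 - θ)Φ⁰(x_k) + θΦ⁰(x_*)`. Both survive for `Φ^δ` up to `O(δ)` errors,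
since `Φ^δ - Φ⁰ = ⟪F - y, y - y^δ⟫ + ‖y - y^δ‖² / 2` and `F` is `ω̄`-Lipschitz on the ball.
Multiplying the combined estimate by `(k + α - 1)² / (α - 1)` gives the energy inequality.
-/

open Metric AffineMap
open scoped RealInnerProductSpace

theorem inner_sub_nonpos_of_forall_norm_sub_le {X : Type*} [NormedAddCommGroup X]
    [InnerProductSpace ℝ X] {K : Set X} (hK : Convex ℝ K) {a p : X}
    (hp : p ∈ K) (hmin : ∀ w ∈ K, ‖a - p‖ ≤ ‖a - w‖) {w : X} (hw : w ∈ K) :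
    ⟪a - p, w - p⟫ ≤ 0 := by
  have : Nonempty K := ⟨⟨p, hp⟩⟩
  refine (norm_eq_iInf_iff_real_inner_le_zero hK hp).mp ?_ w hw
  exact le_antisymm (le_ciInf fun w ↦ hmin w w.2)
    (ciInf_le ⟨0, by rintro _ ⟨w, rfl⟩; positivity⟩ (⟨p, hp⟩ : K))

section Gradient

variable {X : Type*} [NormedAddCommGroup X] [InnerProductSpace ℝ X] [CompleteSpace X]
  {f : X → ℝ} {g : X → X} {s : Set X} {u v : X} {L : ℝ}

theorem HasGradientAt.hasDerivAt_comp_lineMap {g₀ : X} {t : ℝ}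
    (hf : HasGradientAt f g₀ (lineMap u v t)) :
    HasDerivAt (f ∘ lineMap u v) ⟪g₀, v - u⟫ t := by
  simpa using (hasGradientAt_iff_hasFDerivAt.mp hf).comp_hasDerivAt t hasDerivAt_lineMap

theorem ConvexOn.add_inner_le_of_hasGradientAt (hf : ConvexOn ℝ s f) (hu : u ∈ s) (hv : v ∈ s)
    {g₀ : X} (hg : HasGradientAt f g₀ u) : f u + ⟪g₀, v - u⟫ ≤ f v := by
  have h := (hf.comp_affineMap (lineMap u v)).le_slope_of_hasDerivAt (x := 0) (y := 1)
    (by simpa) (by simpa) one_pos (HasGradientAt.hasDerivAt_comp_lineMap (by simpa))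
  simp only [slope_def_field, sub_zero, div_one, Function.comp_apply, lineMap_apply_one,
    lineMap_apply_zero] at h
  linarith

theorem Convex.le_add_inner_add_of_lipschitz_gradient (hs : Convex ℝ s)
    (hf : ∀ w ∈ s, HasGradientAt f (g w) w)
    (hg : ∀ w₁ ∈ s, ∀ w₂ ∈ s, ‖g w₁ - g w₂‖ ≤ L * ‖w₁ - w₂‖) (hu : u ∈ s) (hv : v ∈ s) :
    f v ≤ f u + ⟪g u, v - u⟫ + L / 2 * ‖v - u‖ ^ 2 := by
  set φ : ℝ → ℝ := fun t ↦
    (f ∘ lineMap u v) t - t * ⟪g u, v - u⟫ - t ^ 2 * (L / 2 * ‖v - u‖ ^ 2)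
  have hder : ∀ t ∈ Set.Icc (0 : ℝ) 1, HasDerivAt φ
      (⟪g (lineMap u v t), v - u⟫ - ⟪g u, v - u⟫ - t * (L * ‖v - u‖ ^ 2)) t := by
    intro t ht
    have h₁ := HasGradientAt.hasDerivAt_comp_lineMap (hf _ (hs.lineMap_mem hu hv ht))
    refine ((h₁.sub ((hasDerivAt_id' t).mul_const _)).sub
      ((hasDerivAt_pow 2 t).mul_const _)).congr_deriv ?_
    ring
  have hanti : AntitoneOn φ (Set.Icc 0 1) := by
    refine antitoneOn_of_hasDerivWithinAt_nonpos (convex_Icc 0 1)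
      (fun t ht ↦ (hder t ht).continuousAt.continuousWithinAt)
      (fun t ht ↦ (hder t (interior_subset ht)).hasDerivWithinAt) fun t ht ↦ ?_
    rw [interior_Icc] at ht
    have hdist : ‖lineMap u v t - u‖ = t * ‖v - u‖ := by
      rw [← vsub_eq_sub, lineMap_vsub_left, vsub_eq_sub, norm_smul_of_nonneg ht.1.le]
    have hlip := hg _ (hs.lineMap_mem hu hv (Set.Ioo_subset_Icc_self ht)) u hu
    calc ⟪g (lineMap u v t), v - u⟫ - ⟪g u, v - u⟫ - t * (L * ‖v - u‖ ^ 2)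
        = ⟪g (lineMap u v t) - g u, v - u⟫ - t * (L * ‖v - u‖ ^ 2) := by rw [inner_sub_left]
      _ ≤ ‖g (lineMap u v t) - g u‖ * ‖v - u‖ - t * (L * ‖v - u‖ ^ 2) := by
        gcongr; exact real_inner_le_norm _ _
      _ ≤ 0 := by
        rw [hdist] at hlip
        nlinarith [mul_le_mul_of_nonneg_right hlip (norm_nonneg (v - u))]
  have := hanti (Set.left_mem_Icc.2 zero_le_one) (Set.right_mem_Icc.2 zero_le_one) zero_le_one
  simp only [φ, Function.comp_apply, lineMap_apply_one, lineMap_apply_zero] at this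
  linarith

theorem ConvexOn.projected_gradient_step_le (hconv : ConvexOn ℝ s f)
    (hf : ∀ w ∈ s, HasGradientAt f (g w) w)
    (hg : ∀ w₁ ∈ s, ∀ w₂ ∈ s, ‖g w₁ - g w₂‖ ≤ L * ‖w₁ - w₂‖) {ω : ℝ} (hω : 0 ≤ ω)
    (hωL : L * ω ≤ 1) {z x' v ĝ : X} (hz : z ∈ s) (hx' : x' ∈ s) (hv : v ∈ s)
    (hproj : ⟪z - ω • ĝ - x', v - x'⟫ ≤ 0) :
    2 * ω * (f x' - f v) ≤ ‖z - v‖ ^ 2 - ‖x' - v‖ ^ 2 + 2 * ω * ⟪g z - ĝ, x' - v⟫ := by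
  have hdescent := hconv.1.le_add_inner_add_of_lipschitz_gradient hf hg hz hx'
  have htangent := hconv.add_inner_le_of_hasGradientAt hz hv (hf z hz)
  have hpyth : ‖z - v‖ ^ 2 = ‖x' - z‖ ^ 2 + 2 * ⟪z - x', x' - v⟫ + ‖x' - v‖ ^ 2 := by
    rw [← sub_add_sub_cancel z x' v, norm_add_sq_real, norm_sub_rev z x']
  have hinner : ⟪g z, x' - z⟫ - ⟪g z, v - z⟫ = ⟪g z - ĝ, x' - v⟫ + ⟪ĝ, x' - v⟫ := by
    rw [← inner_sub_right, ← inner_add_left]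
    congr 1 <;> abel
  have hproj' : ω * ⟪ĝ, x' - v⟫ ≤ ⟪z - x', x' - v⟫ := by
    rw [sub_right_comm, ← neg_sub x' v, inner_neg_right, inner_sub_left,
      real_inner_smul_left] at hproj
    linarith
  have hL : ω * (L * ‖x' - z‖ ^ 2) ≤ ‖x' - z‖ ^ 2 := by
    nlinarith [sq_nonneg ‖x' - z‖]
  nlinarith [mul_le_mul_of_nonneg_left hdescent hω, mul_le_mul_of_nonneg_left htangent hω]

end Gradient

noncomputable def misfit {X Y : Type*} [SeminormedAddCommGroup Y] (F : X → Y) (c : Y) (u : X) :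
    ℝ :=
  1 / 2 * ‖F u - c‖ ^ 2

section Misfit

variable {X Y : Type*} [NormedAddCommGroup Y] [InnerProductSpace ℝ Y] {F : X → Y} {y yδ : Y}

theorem hasGradientAt_misfit [NormedAddCommGroup X] [InnerProductSpace ℝ X] [CompleteSpace X]
    [CompleteSpace Y] {A : X →L[ℝ] Y} {u : X} (hF : HasFDerivAt F A u) (c : Y) :
    HasGradientAt (misfit F c) (ContinuousLinearMap.adjoint A (F u - c)) u := by
  refine hasGradientAt_iff_hasFDerivAt.mpr
    (((hF.sub_const c).norm_sq.const_mul (1 / 2)).congr_fderiv ?_)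
  ext h
  simp [ContinuousLinearMap.adjoint_inner_left]

theorem misfit_eq_add_inner (u : X) :
    misfit F yδ u = misfit F y u + ⟪F u - y, y - yδ⟫ + 1 / 2 * ‖y - yδ‖ ^ 2 := by
  rw [misfit, misfit, ← sub_add_sub_cancel (F u) y yδ, norm_add_sq_real]
  ring

theorem misfit_sub_misfit_le (a b : X) :
    misfit F yδ a - misfit F yδ b ≤ misfit F y a - misfit F y b + ‖F a - F b‖ * ‖y - yδ‖ := by
  have h : ⟪F a - y, y - yδ⟫ - ⟪F b - y, y - yδ⟫ ≤ ‖F a - F b‖ * ‖y - yδ‖ := by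
    rw [← inner_sub_left, sub_sub_sub_cancel_right]
    exact real_inner_le_norm _ _
  rw [misfit_eq_add_inner (y := y) a, misfit_eq_add_inner (y := y) b]
  linarith

theorem misfit_lineMap_le [NormedAddCommGroup X] [InnerProductSpace ℝ X] {S : Set X}
    (hconv : ConvexOn ℝ S (misfit F y)) {K : ℝ} (hK : 0 ≤ K)
    (hF : ∀ a ∈ S, ∀ b ∈ S, ‖F a - F b‖ ≤ K * ‖a - b‖) {a b : X} (ha : a ∈ S) (hb : b ∈ S)
    {θ : ℝ} (hθ : θ ∈ Set.Icc (0 : ℝ) 1) {δ : ℝ} (hδ : ‖y - yδ‖ ≤ δ) :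
    misfit F yδ (lineMap a b θ) ≤ (1 - θ) * misfit F yδ a + θ * misfit F yδ b
      + 2 * θ * (1 - θ) * (K * ‖a - b‖ * δ) := by
  set v := lineMap a b θ
  have hconvv : misfit F y v ≤ (1 - θ) * misfit F y a + θ * misfit F y b := by
    simpa [v, lineMap_apply_module] using
      hconv.2 ha hb (sub_nonneg.2 hθ.2) hθ.1 (sub_add_cancel 1 θ)
  have hva : ‖v - a‖ = θ * ‖a - b‖ := by
    rw [← vsub_eq_sub, lineMap_vsub_left, vsub_eq_sub, norm_smul_of_nonneg hθ.1,
      norm_sub_rev]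
  have hvb : ‖v - b‖ = (1 - θ) * ‖a - b‖ := by
    rw [← vsub_eq_sub, lineMap_vsub_right, vsub_eq_sub,
      norm_smul_of_nonneg (sub_nonneg.2 hθ.2)]
  have hvS : v ∈ S := hconv.1.lineMap_mem ha hb hθ
  have hda : misfit F yδ v - misfit F yδ a ≤
      misfit F y v - misfit F y a + K * (θ * ‖a - b‖) * δ := by
    refine (misfit_sub_misfit_le (y := y) v a).trans ?_
    rw [← hva]; gcongr; exact hF v hvS a ha
  have hdb : misfit F yδ v - misfit F yδ b ≤
      misfit F y v - misfit F y b + K * ((1 - θ) * ‖a - b‖) * δ := by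
    refine (misfit_sub_misfit_le (y := y) v b).trans ?_
    rw [← hvb]; gcongr; exact hF v hvS b hb
  linarith [mul_le_mul_of_nonneg_left hda (sub_nonneg.2 hθ.2), mul_le_mul_of_nonneg_left hdb hθ.1]

theorem misfit_projected_gradient_step_le [NormedAddCommGroup X] [InnerProductSpace ℝ X]
    [CompleteSpace X] [CompleteSpace Y] {F' : X → X →L[ℝ] Y} {S : Set X}
    (hF : ∀ u ∈ S, HasFDerivAt F (F' u) u) (hconv : ConvexOn ℝ S (misfit F y)) {L : ℝ}
    (hLip : ∀ u ∈ S, ∀ v ∈ S, ‖ContinuousLinearMap.adjoint (F' u) (F u - y) -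
      ContinuousLinearMap.adjoint (F' v) (F v - y)‖ ≤ L * ‖u - v‖)
    {ω : ℝ} (hω : 0 ≤ ω) (hωL : L * ω ≤ 1) {z x' v : X} (hz : z ∈ S) (hx' : x' ∈ S) (hv : v ∈ S)
    {K δ : ℝ} (hFz : ‖F' z‖ ≤ K) (hFlip : ‖F x' - F v‖ ≤ K * ‖x' - v‖) (hδ : ‖y - yδ‖ ≤ δ)
    (hproj : ⟪z + ω • ContinuousLinearMap.adjoint (F' z) (yδ - F z) - x', v - x'⟫ ≤ 0) :
    2 * ω * (misfit F yδ x' - misfit F yδ v) ≤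
      ‖z - v‖ ^ 2 - ‖x' - v‖ ^ 2 + 4 * ω * (K * ‖x' - v‖ * δ) := by
  set A := ContinuousLinearMap.adjoint (F' z)
  have hK : 0 ≤ K := (norm_nonneg _).trans hFz
  have hstep := hconv.projected_gradient_step_le (fun u hu ↦ hasGradientAt_misfit (hF u hu) y)
    hLip hω hωL hz hx' hv (ĝ := A (F z - yδ))
    (by rwa [← neg_sub (F z), map_neg, smul_neg, ← sub_eq_add_neg] at hproj)
  have hgrad : ⟪A (F z - y) - A (F z - yδ), x' - v⟫ ≤ K * ‖x' - v‖ * δ := by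
    rw [← map_sub, sub_sub_sub_cancel_left, ContinuousLinearMap.adjoint_inner_left]
    calc ⟪yδ - y, F' z (x' - v)⟫ ≤ ‖yδ - y‖ * ‖F' z (x' - v)‖ := real_inner_le_norm _ _
      _ ≤ δ * (K * ‖x' - v‖) := by
        rw [norm_sub_rev]
        exact mul_le_mul hδ ((F' z).le_of_opNorm_le hFz _) (norm_nonneg _)
          ((norm_nonneg _).trans hδ)
      _ = K * ‖x' - v‖ * δ := by ring
  have hmisfit : misfit F yδ x' - misfit F yδ v ≤ misfit F y x' - misfit F y v + K * ‖x' - v‖ * δ :=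
    (misfit_sub_misfit_le x' v).trans (by gcongr)
  linarith [mul_le_mul_of_nonneg_left hmisfit hω, mul_le_mul_of_nonneg_left hgrad hω]

end Misfit

theorem norm_sub_le_of_mem_closedBall {E : Type*} [SeminormedAddCommGroup E] {c a b : E}
    {r r' : ℝ} (ha : a ∈ closedBall c r) (hb : b ∈ closedBall c r') : ‖a - b‖ ≤ r + r' := by
  rw [← dist_eq_norm]
  exact (dist_triangle_right a b c).trans (add_le_add ha hb)

theorem add_smul_sub_mem_closedBall {E : Type*} [SeminormedAddCommGroup E] [NormedSpace ℝ E]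
    {c a b : E} {r β : ℝ} (ha : a ∈ closedBall c r) (hb : b ∈ closedBall c r) (hβ : |β| ≤ 1) :
    a + β • (a - b) ∈ closedBall c (3 * r) := by
  have hac : ‖a - c‖ ≤ r := by rwa [← dist_eq_norm]
  rw [mem_closedBall, dist_eq_norm]
  calc ‖a + β • (a - b) - c‖ ≤ ‖a - c‖ + |β| * ‖a - b‖ := by
        rw [add_sub_right_comm, ← Real.norm_eq_abs, ← norm_smul]; exact norm_add_le _ _
    _ ≤ r + 1 * (r + r) := by gcongr; exact norm_sub_le_of_mem_closedBall ha hb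
    _ = 3 * r := by ring

section Extrapolation

variable {E : Type*} [SeminormedAddCommGroup E] [NormedSpace ℝ E] {p q r : E} {a m N : ℝ}

theorem mul_norm_extrapolation_sub (ha : 0 < a) (hN : 0 < N) :
    a * ‖p + (m / a) • (p - q) - r‖ = N * ‖p + (m / N) • (p - q) - lineMap p r (a / N)‖ := by
  rw [← norm_smul_of_nonneg ha.le, ← norm_smul_of_nonneg hN.le, lineMap_apply_module']
  congr 1
  match_scalars <;> field_simp; ring

theorem mul_norm_extrapolation_sub_lineMap (ha : 0 < a) (hN : N = m + a) (hN₀ : 0 < N) {p' : E} :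
    a * ‖p' + (m / a) • (p' - p) - r‖ = N * ‖p' - lineMap p r (a / N)‖ := by
  rw [← norm_smul_of_nonneg ha.le, ← norm_smul_of_nonneg hN₀.le, lineMap_apply_module']
  congr 1
  match_scalars <;> field_simp <;> linarith

end Extrapolation

theorem nesterov_energy_le_of_step_estimates {k α ω ωb δ ρ Δ Φk Φ₁ Φs Φv Z R Wk W₁ D : ℝ}
    (hk : 0 ≤ k) (hα : 3 < α) (hω : 0 < ω) (hωb : 0 ≤ ωb) (hδ : 0 ≤ δ)
    (hΔ : δ ^ 2 / 2 + 14 * ρ * ωb * δ ≤ Δ) (hΦk : 0 ≤ Φk) (hΦs : Φs ≤ δ ^ 2 / 2)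
    (hD₀ : 0 ≤ D) (hD : D ≤ 3 * ρ) (hR : R ≤ 4 * ρ)
    (hWk : (α - 1) * Wk = (k + α - 1) * Z) (hW₁ : (α - 1) * W₁ = (k + α - 1) * R)
    (hstep : 2 * ω * (Φ₁ - Φv) ≤ Z ^ 2 - R ^ 2 + 4 * ω * (ωb * R * δ))
    (hconv : Φv ≤ (1 - (α - 1) / (k + α - 1)) * Φk + (α - 1) / (k + α - 1) * Φs
      + 2 * ((α - 1) / (k + α - 1)) * (1 - (α - 1) / (k + α - 1)) * (ωb * D * δ)) :
    2 * ω / (α - 1) * (k + 1 + α - 2) ^ 2 * (Φ₁ - Φs) + (α - 1) * W₁ ^ 2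
      + 2 * ω / (α - 1) * (k * (α - 3) * (Φk - Φs) - (k + α - 1) ^ 2 * Δ)
      ≤ 2 * ω / (α - 1) * (k + α - 2) ^ 2 * (Φk - Φs) + (α - 1) * Wk ^ 2 := by
  have ha : 0 < α - 1 := by linarith
  have hN : 0 < k + α - 1 := by linarith
  have hscaled : (k + α - 1) ^ 2 * (2 * ω * (Φ₁ - Φs)) ≤ 2 * ω * (k + α - 1) * k * (Φk - Φs)
      + (α - 1) ^ 2 * Wk ^ 2 - (α - 1) ^ 2 * W₁ ^ 2
      + 4 * ω * (ωb * δ) * ((k + α - 1) ^ 2 * R + (α - 1) * k * D) := by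
    have h := mul_le_mul_of_nonneg_left
      (show 2 * ω * (Φ₁ - Φs) ≤ 2 * ω * ((1 - (α - 1) / (k + α - 1)) * (Φk - Φs)) + Z ^ 2 - R ^ 2
        + 4 * ω * (ωb * δ) * (R + (α - 1) / (k + α - 1) * (1 - (α - 1) / (k + α - 1)) * D) by
          linarith [mul_le_mul_of_nonneg_left hconv (by positivity : (0 : ℝ) ≤ 2 * ω)])
      (sq_nonneg (k + α - 1))
    refine h.trans_eq ?_
    field_simp
    linear_combination (-(α - 1) * Wk - (k + α - 1) * Z) * hWk
      + ((α - 1) * W₁ + (k + α - 1) * R) * hW₁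
  have hnoise : (k + α - 1) ^ 2 * R + (α - 1) * k * D ≤ (k + α - 1) ^ 2 * (7 * ρ) := by
    have hak : (α - 1) * k ≤ (k + α - 1) ^ 2 := by nlinarith
    nlinarith [mul_le_mul hak hD hD₀ (sq_nonneg (k + α - 1))]
  have hinit : -(α - 2) ^ 2 * (Φk - Φs) ≤ (k + α - 1) ^ 2 * (δ ^ 2 / 2) := by
    have h2 : (α - 2) ^ 2 ≤ (k + α - 1) ^ 2 := by nlinarith
    nlinarith [mul_le_mul_of_nonneg_left (show Φs - Φk ≤ δ ^ 2 / 2 by linarith) (sq_nonneg (α - 2))]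
  have hΔ' := mul_le_mul_of_nonneg_left hΔ
    (mul_nonneg (mul_nonneg zero_le_two hω.le) (sq_nonneg (k + α - 1)))
  have hnoise' := mul_le_mul_of_nonneg_left hnoise
    (mul_nonneg (mul_nonneg zero_le_four hω.le) (mul_nonneg hωb hδ))
  have hinit' := mul_le_mul_of_nonneg_left hinit (mul_nonneg zero_le_two hω.le)
  obtain ⟨q, hq⟩ : ∃ q, q = 2 * ω / (α - 1) := ⟨_, rfl⟩
  have hqa : q * (α - 1) = 2 * ω := by rw [hq, div_mul_cancel₀ _ ha.ne']
  rw [← hq]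
  refine le_of_mul_le_mul_left ?_ ha
  -- `(k + α - 2)² = k (k + α - 1) + k (α - 3) + (α - 2)²`
  linear_combination hscaled + hΔ' + hnoise' + hinit'
    + ((k + α - 1) ^ 2 * (Φ₁ - Φs) + k * (α - 3) * (Φk - Φs) - (k + α - 1) ^ 2 * Δ
      - (k + α - 2) ^ 2 * (Φk - Φs)) * hqa

/-- The energy inequality
`E^δ(k+1) + (2ω/(α−1))( k(α−3)(Φ^δ(x_k^δ) − Φ^δ(x_*)) − (k+α−1)²Δ(δ) ) ≤ E^δ(k)`. -/
theorem nesterov_energy_inequality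
    {X Y : Type*} [NormedAddCommGroup X] [InnerProductSpace ℝ X] [CompleteSpace X]
    [NormedAddCommGroup Y] [InnerProductSpace ℝ Y] [CompleteSpace Y]
    (x₀ : X) (ρ : ℝ) (hρ : 0 < ρ)
    (F : X → Y) (F' : X → X →L[ℝ] Y)
    (hF : ∀ u ∈ closedBall x₀ (6 * ρ), HasFDerivAt F (F' u) u)
    (ωb : ℝ) (hωb : ∀ u ∈ closedBall x₀ (6 * ρ), ‖F' u‖ ≤ ωb)
    (y : Y) (xstar : X) (hxstar : xstar ∈ closedBall x₀ ρ) (hFxstar : F xstar = y)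
    (δ : ℝ) (yδ : Y) (hδ : ‖y - yδ‖ ≤ δ)
    -- the residual functionals
    (Φδ Φ0 : X → ℝ)
    (hΦδ : ∀ u, Φδ u = (1 / 2) * ‖F u - yδ‖ ^ 2)
    (hΦ0 : ∀ u, Φ0 u = (1 / 2) * ‖F u - y‖ ^ 2)
    -- convexity and Lipschitz continuity of the exact gradient on `B_{6ρ}(x₀)`
    (hconv : ConvexOn ℝ (closedBall x₀ (6 * ρ)) Φ0)
    (L : ℝ) (hL : 0 < L)
    (hLip : ∀ u ∈ closedBall x₀ (6 * ρ), ∀ v ∈ closedBall x₀ (6 * ρ),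
      ‖(ContinuousLinearMap.adjoint (F' u)) (F u - y) -
        (ContinuousLinearMap.adjoint (F' v)) (F v - y)‖ ≤ L * ‖u - v‖)
    (α ω : ℝ) (hα : 3 < α) (hω : 0 < ω) (hωL : ω < 1 / L)
    -- `P` is the metric projection onto the closed ball `B_{2ρ}(x₀)`
    (P : X → X)
    (hP_mem : ∀ u, P u ∈ closedBall x₀ (2 * ρ))
    (hP_proj : ∀ u, ∀ v ∈ closedBall x₀ (2 * ρ), ‖u - P u‖ ≤ ‖u - v‖)
    -- the Nesterov iteration (with `x₋₁ = x₀` encoded via truncated subtraction)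
    (x z : ℕ → X)
    (hx0 : x 0 = x₀)
    (hz : ∀ k : ℕ, z k = x k + (((k : ℝ) - 1) / ((k : ℝ) + α - 1)) • (x k - x (k - 1)))
    (hx : ∀ k : ℕ, x (k + 1) = P (z k + ω • (ContinuousLinearMap.adjoint (F' (z k))) (yδ - F (z k))))
    -- the auxiliary sequence `w`, the energy `E`, and `Δ(δ)`
    (w : ℕ → X)
    (hw : ∀ k : ℕ, w k = x k + (((k : ℝ) - 1) / (α - 1)) • (x k - x (k - 1)))
    (E : ℕ → ℝ)
    (hE : ∀ k : ℕ, E k = (2 * ω / (α - 1)) * ((k : ℝ) + α - 2) ^ 2 * (Φδ (x k) - Φδ xstar)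
      + (α - 1) * ‖w k - xstar‖ ^ 2)
    (c₁ c₂ Δ : ℝ)
    (hc₁ : c₁ = 2 * ωb ^ 3 * ω * ρ + 20 * ρ * ωb)
    (hc₂ : c₂ = 3 + (1 / 2) * ωb ^ 4 * ω ^ 2 + (1 / 2) * ω * ωb ^ 2)
    (hΔ : Δ = c₁ * δ + c₂ * δ ^ 2) :
    ∀ k : ℕ,
      E (k + 1) + (2 * ω / (α - 1)) *
        ((k : ℝ) * (α - 3) * (Φδ (x k) - Φδ xstar) - ((k : ℝ) + α - 1) ^ 2 * Δ)
      ≤ E k := by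
  intro k
  obtain rfl : Φδ = misfit F yδ := funext hΦδ
  obtain rfl : Φ0 = misfit F y := funext hΦ0
  have hα₁ : 0 < α - 1 := by linarith
  have hN : 0 < (k : ℝ) + α - 1 := by linarith [k.cast_nonneg (α := ℝ)]
  have hωb₀ : 0 ≤ ωb := (norm_nonneg _).trans (hωb x₀ (mem_closedBall_self (by positivity)))
  have hδ₀ : 0 ≤ δ := (norm_nonneg _).trans hδ
  have hB : closedBall x₀ (2 * ρ) ⊆ closedBall x₀ (6 * ρ) :=
    closedBall_subset_closedBall (by linarith)
  have hxB : ∀ n, x n ∈ closedBall x₀ (2 * ρ)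
    | 0 => hx0 ▸ mem_closedBall_self (by positivity)
    | n + 1 => hx n ▸ hP_mem _
  have hxstarB : xstar ∈ closedBall x₀ (2 * ρ) := closedBall_subset_closedBall (by linarith) hxstar
  have hzB : z k ∈ closedBall x₀ (6 * ρ) := by
    rw [hz k, show 6 * ρ = 3 * (2 * ρ) by ring]
    refine add_smul_sub_mem_closedBall (hxB k) (hxB (k - 1)) (abs_le.2 ⟨?_, ?_⟩)
    · rw [le_div_iff₀ hN]; linarith
    · rw [div_le_one hN]; linarith
  have hFlip : ∀ a ∈ closedBall x₀ (6 * ρ), ∀ b ∈ closedBall x₀ (6 * ρ),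
      ‖F a - F b‖ ≤ ωb * ‖a - b‖ := fun a ha b hb ↦
    (convex_closedBall _ _).norm_image_sub_le_of_norm_hasFDerivWithin_le
      (fun u hu ↦ (hF u hu).hasFDerivWithinAt) hωb hb ha
  have hθ : (α - 1) / ((k : ℝ) + α - 1) ∈ Set.Icc (0 : ℝ) 1 :=
    ⟨by positivity, by rw [div_le_one hN]; linarith⟩
  set v := lineMap (x k) xstar ((α - 1) / ((k : ℝ) + α - 1))
  have hvB : v ∈ closedBall x₀ (2 * ρ) := (convex_closedBall _ _).lineMap_mem (hxB k) hxstarB hθ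
  have hstep := misfit_projected_gradient_step_le hF hconv hLip
    hω.le (by rw [lt_div_iff₀ hL] at hωL; linarith) hzB (hB (hxB (k + 1))) (hB hvB) (hωb _ hzB)
    (hFlip _ (hB (hxB (k + 1))) _ (hB hvB)) hδ
    (hx k ▸ inner_sub_nonpos_of_forall_norm_sub_le (convex_closedBall _ _) (hP_mem _)
      (hP_proj _) hvB)
  have hconvδ := misfit_lineMap_le (yδ := yδ) hconv hωb₀ hFlip (hB (hxB k)) (hB hxstarB) hθ hδ
  have hΔ' : δ ^ 2 / 2 + 14 * ρ * ωb * δ ≤ Δ := by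
    rw [hΔ, hc₁, hc₂, ← sub_nonneg]; ring_nf; positivity
  have hΦs : misfit F yδ xstar ≤ δ ^ 2 / 2 := by
    rw [misfit, hFxstar]; linarith [pow_le_pow_left₀ (norm_nonneg _) hδ 2]
  rw [hE, hE, hw, hw]
  push_cast
  exact nesterov_energy_le_of_step_estimates k.cast_nonneg hα hω hωb₀ hδ₀ hΔ'
    (by rw [misfit]; positivity) hΦs (norm_nonneg _)
    ((norm_sub_le_of_mem_closedBall (hxB k) hxstar).trans (by linarith))
    ((norm_sub_le_of_mem_closedBall (hxB (k + 1)) hvB).trans (by linarith))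
    (by rw [hz k]; exact mul_norm_extrapolation_sub hα₁ hN)
    (mul_norm_extrapolation_sub_lineMap hα₁ (by ring) hN) hstep hconvδ
end

section
/- Assume the local strong convexity condition: there is μ > 0 such that ⟨F'(x₁)*(F(x₁) − y) − F'(x₂)*(F(x₂) − y), x₁ − x₂⟩ ≥ μ‖x₁ − x₂‖² for all x₁, x₂ ∈ B_{2ρ}(x₀). Then for every x ∈ B_{2ρ}(x₀) there holds μ‖x − x_*‖ ≤ ω̄‖F(x) − y‖; in particular, ‖F(x_k) − y‖ → 0 for a sequence x_k ∈ B_{2ρ}(x₀) implies ‖x_k − x_*‖ → 0. -/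
open Metric Filter
open scoped RealInnerProductSpace Topology

/-! Testing strong convexity against `x_*`, where the residual vanishes, gives
`μ‖x − x_*‖² ≤ ⟪F'(x)*(F x − y), x − x_*⟫ ≤ ω̄‖F x − y‖‖x − x_*‖`. -/

theorem mul_norm_le_norm_of_mul_norm_sq_le_inner {E : Type*} [NormedAddCommGroup E]
    [InnerProductSpace ℝ E] {u v : E} {μ : ℝ} (h : μ * ‖v‖ ^ 2 ≤ ⟪u, v⟫) :
    μ * ‖v‖ ≤ ‖u‖ := by
  rcases (norm_nonneg v).eq_or_lt with hv | hv
  · rw [← hv, mul_zero]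
    exact norm_nonneg u
  · refine le_of_mul_le_mul_right ?_ hv
    calc μ * ‖v‖ * ‖v‖ = μ * ‖v‖ ^ 2 := by ring
      _ ≤ ⟪u, v⟫ := h
      _ ≤ ‖u‖ * ‖v‖ := real_inner_le_norm u v

theorem norm_adjoint_apply_le {E F : Type*} [NormedAddCommGroup E] [InnerProductSpace ℝ E]
    [CompleteSpace E] [NormedAddCommGroup F] [InnerProductSpace ℝ F] [CompleteSpace F]
    (A : E →L[ℝ] F) (r : F) : ‖ContinuousLinearMap.adjoint A r‖ ≤ ‖A‖ * ‖r‖ := by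
  simpa only [LinearIsometryEquiv.norm_map] using (ContinuousLinearMap.adjoint A).le_opNorm r

theorem tendsto_zero_of_mul_le_mul {ι : Type*} {l : Filter ι} {f g : ι → ℝ} {μ ω : ℝ}
    (hμ : 0 < μ) (hf : ∀ i, 0 ≤ f i) (hfg : ∀ i, μ * f i ≤ ω * g i)
    (hg : Tendsto g l (𝓝 0)) : Tendsto f l (𝓝 0) := by
  have hbound : ∀ i, f i ≤ ω / μ * g i := fun i => by
    rw [div_mul_eq_mul_div, le_div_iff₀ hμ, mul_comm]
    exact hfg i
  exact squeeze_zero hf hbound (by simpa using hg.const_mul (ω / μ))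

theorem strong_convexity_implies_strong_convergence_general
    {X Y : Type*} [NormedAddCommGroup X] [InnerProductSpace ℝ X] [CompleteSpace X]
    [NormedAddCommGroup Y] [InnerProductSpace ℝ Y] [CompleteSpace Y]
    (x₀ : X) (ρ : ℝ)
    (F : X → Y) (F' : X → X →L[ℝ] Y)
    (ωb : ℝ) (hωb : ∀ u ∈ closedBall x₀ (2 * ρ), ‖F' u‖ ≤ ωb)
    (y : Y) (xstar : X) (hxstar : xstar ∈ closedBall x₀ (2 * ρ)) (hFxstar : F xstar = y)
    (μ : ℝ) (hμ : 0 < μ)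
    -- local strong convexity
    (hsc : ∀ x₁ ∈ closedBall x₀ (2 * ρ), ∀ x₂ ∈ closedBall x₀ (2 * ρ),
      ⟪(ContinuousLinearMap.adjoint (F' x₁)) (F x₁ - y) -
        (ContinuousLinearMap.adjoint (F' x₂)) (F x₂ - y), x₁ - x₂⟫ ≥ μ * ‖x₁ - x₂‖ ^ 2) :
    (∀ x ∈ closedBall x₀ (2 * ρ), μ * ‖x - xstar‖ ≤ ωb * ‖F x - y‖) ∧
    (∀ xk : ℕ → X, (∀ k, xk k ∈ closedBall x₀ (2 * ρ)) →
      Tendsto (fun k => ‖F (xk k) - y‖) atTop (nhds 0) →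
      Tendsto (fun k => ‖xk k - xstar‖) atTop (nhds 0)) := by
  have hstab : ∀ x ∈ closedBall x₀ (2 * ρ), μ * ‖x - xstar‖ ≤ ωb * ‖F x - y‖ := by
    intro x hx
    have hmono := hsc x hx xstar hxstar
    rw [hFxstar, sub_self, map_zero, sub_zero] at hmono
    calc μ * ‖x - xstar‖ ≤ ‖ContinuousLinearMap.adjoint (F' x) (F x - y)‖ :=
          mul_norm_le_norm_of_mul_norm_sq_le_inner hmono
      _ ≤ ‖F' x‖ * ‖F x - y‖ := norm_adjoint_apply_le _ _
      _ ≤ ωb * ‖F x - y‖ := by gcongr; exact hωb x hx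
  exact ⟨hstab, fun xk hk hres =>
    tendsto_zero_of_mul_le_mul hμ (fun _ => norm_nonneg _) (fun k => hstab _ (hk k)) hres⟩

/-- Under local strong convexity of the residual functional,
`μ‖x − x_*‖ ≤ ω̄‖F(x) − y‖` on `B_{2ρ}(x₀)`; in particular residual convergence to zero
implies strong convergence to `x_*`. -/
theorem strong_convexity_implies_strong_convergence
    {X Y : Type*} [NormedAddCommGroup X] [InnerProductSpace ℝ X] [CompleteSpace X]
    [NormedAddCommGroup Y] [InnerProductSpace ℝ Y] [CompleteSpace Y]
    (x₀ : X) (ρ : ℝ) (hρ : 0 < ρ)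
    (F : X → Y) (F' : X → X →L[ℝ] Y)
    (hF : ∀ u ∈ closedBall x₀ (2 * ρ), HasFDerivAt F (F' u) u)
    (ωb : ℝ) (hωb : ∀ u ∈ closedBall x₀ (2 * ρ), ‖F' u‖ ≤ ωb)
    (y : Y) (xstar : X) (hxstar : xstar ∈ closedBall x₀ (2 * ρ)) (hFxstar : F xstar = y)
    (μ : ℝ) (hμ : 0 < μ)
    -- local strong convexity
    (hsc : ∀ x₁ ∈ closedBall x₀ (2 * ρ), ∀ x₂ ∈ closedBall x₀ (2 * ρ),
      ⟪(ContinuousLinearMap.adjoint (F' x₁)) (F x₁ - y) -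
        (ContinuousLinearMap.adjoint (F' x₂)) (F x₂ - y), x₁ - x₂⟫ ≥ μ * ‖x₁ - x₂‖ ^ 2) :
    (∀ x ∈ closedBall x₀ (2 * ρ), μ * ‖x - xstar‖ ≤ ωb * ‖F x - y‖) ∧
    (∀ xk : ℕ → X, (∀ k, xk k ∈ closedBall x₀ (2 * ρ)) →
      Tendsto (fun k => ‖F (xk k) - y‖) atTop (nhds 0) →
      Tendsto (fun k => ‖xk k - xstar‖) atTop (nhds 0)) :=
  strong_convexity_implies_strong_convergence_general x₀ ρ F F' ωb hωb y xstar hxstar hFxstar μ hμ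
    hsc
end
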